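/- arXiv:1312.5646 — 3 statements merged into one kernel-verified Lean document; each statement's English description precedes it below -/
import Mathlib

section
/- Let G be a finite graph with vertex set V and edge set E, and let v ∈ ℂ. Then Σ_{σ : V → {−1,1}} ∏_{{i,j} ∈ E} (1 + v σ_i σ_j) = 2^{|V|} Σ_S v^{|S|}, where the sum on the right runs over all even subgraphs S ⊆ E (including the empty set). -/
/-- The spin value of a site: `true ↦ +1`, `false ↦ -1`, as a complex number. -/
def spinC (b : Bool) : ℂ := if b then 1 else -1

/-- The product `σ_i σ_j` over the unordered pair (edge) `{i,j}`. -/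
def edgeSpinProdC {V : Type*} (σ : V → Bool) : Sym2 V → ℂ :=
  Sym2.lift ⟨fun i j => spinC (σ i) * spinC (σ j), fun i j => by ring⟩

/-- A finset `S` of edges is an even subgraph if every vertex is incident
to an even number of edges of `S`. -/
def IsEvenSubgraph {V : Type*} [DecidableEq V] (S : Finset (Sym2 V)) : Prop :=
  ∀ v : V, Even ((S.filter (fun e => v ∈ e)).card)

instance {V : Type*} [Fintype V] [DecidableEq V] (S : Finset (Sym2 V)) :
    Decidable (IsEvenSubgraph S) :=
  inferInstanceAs (Decidable (∀ v : V, Even ((S.filter (fun e => v ∈ e)).card)))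

/-!
Expanding each factor `1 + v σ_i σ_j` over subsets of edges gives
`∑_{S ⊆ E} v^{|S|} ∑_σ ∏_{e ∈ S} σ_e`, and `∏_{e ∈ S} σ_e = ∏_w σ_w^{deg_S w}`.
The spins are independent, so the inner sum factors into `∏_w (1 + (-1)^{deg_S w})`,
which is `2^{|V|}` when every degree is even and `0` otherwise.
-/

open Finset

lemma sum_spinC_pow (d : ℕ) : ∑ b : Bool, spinC b ^ d = if Even d then 2 else 0 := by
  rcases Nat.even_or_odd d with h | h
  · simp [spinC, h, h.neg_one_pow, one_add_one_eq_two]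
  · simp [spinC, Nat.not_even_iff_odd.mpr h, h.neg_one_pow]

section

variable {V : Type*} [Fintype V] [DecidableEq V]

lemma edgeSpinProdC_eq_prod (σ : V → Bool) {e : Sym2 V} (he : ¬ e.IsDiag) :
    edgeSpinProdC σ e = ∏ w with w ∈ e, spinC (σ w) := by
  induction e using Sym2.inductionOn with
  | hf i j =>
    have hij : i ≠ j := by simpa using he
    have hfilter : ({w | w ∈ s(i, j)} : Finset V) = {i, j} := by
      ext w; simp [Sym2.mem_iff]
    rw [hfilter, prod_pair hij]
    rfl

lemma prod_edgeSpinProdC (σ : V → Bool) {S : Finset (Sym2 V)} (hS : ∀ e ∈ S, ¬ e.IsDiag) :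
    ∏ e ∈ S, edgeSpinProdC σ e = ∏ w, spinC (σ w) ^ #(S.filter (w ∈ ·)) := by
  rw [prod_congr rfl fun e he => edgeSpinProdC_eq_prod σ (hS e he),
    prod_comm' (t' := univ) (s' := fun w => S.filter (w ∈ ·)) (by simp [and_comm])]
  simp only [prod_const]

lemma sum_prod_edgeSpinProdC {S : Finset (Sym2 V)} (hS : ∀ e ∈ S, ¬ e.IsDiag) :
    ∑ σ : V → Bool, ∏ e ∈ S, edgeSpinProdC σ e =
      if IsEvenSubgraph S then 2 ^ Fintype.card V else 0 := by
  simp_rw [prod_edgeSpinProdC _ hS]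
  rw [← Fintype.prod_sum (fun w b => spinC b ^ #(S.filter (w ∈ ·)))]
  simp_rw [sum_spinC_pow]
  split_ifs with hE
  · rw [prod_congr rfl fun w _ => if_pos (hE w), prod_const, card_univ]
  · obtain ⟨w, hw⟩ := not_forall.mp hE
    exact prod_eq_zero (mem_univ w) (if_neg hw)

end

lemma prod_one_add_mul {ι R : Type*} [CommSemiring R] (s : Finset ι) (v : R) (f : ι → R) :
    ∏ i ∈ s, (1 + v * f i) = ∑ t ∈ s.powerset, v ^ #t * ∏ i ∈ t, f i := by
  simp only [prod_one_add, prod_mul_distrib, prod_const]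

/-- For a finite graph `G` with vertex set `V` and edge set `E`, and
`v ∈ ℂ`:  `Σ_{σ : V → {±1}} ∏_{{i,j} ∈ E} (1 + v σ_i σ_j) = 2^{|V|} Σ_S v^{|S|}`, where the
sum on the right runs over all even subgraphs `S ⊆ E` (including the empty set). -/
theorem sum_spin_high_temperature_expansion {V : Type*} [Fintype V] [DecidableEq V]
    (G : SimpleGraph V) [DecidableRel G.Adj] (v : ℂ) :
    ∑ σ : V → Bool, ∏ e ∈ G.edgeFinset, (1 + v * edgeSpinProdC σ e) =
      (2 : ℂ) ^ (Fintype.card V) *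
        ∑ S ∈ G.edgeFinset.powerset.filter (fun S => IsEvenSubgraph S), v ^ S.card := by
  have hloopless : ∀ S ∈ G.edgeFinset.powerset, ∀ e ∈ S, ¬ e.IsDiag := fun S hS e he =>
    G.not_isDiag_of_mem_edgeSet (G.mem_edgeFinset.mp (mem_powerset.mp hS he))
  simp_rw [prod_one_add_mul]
  rw [sum_comm, sum_filter, mul_sum]
  refine sum_congr rfl fun S hS => ?_
  rw [← mul_sum, sum_prod_edgeSpinProdC (hloopless S hS)]
  split_ifs <;> simp [mul_comm]
end

section
/- Let G be a finite graph with vertex set V and edge set E, and let K ∈ ℝ. Then the Ising partition function satisfies Z(K) = 2^{|V|} (cosh K)^{|E|} Σ_S (tanh K)^{|S|}, where the sum runs over all even subgraphs S ⊆ E (including the empty set). -/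
/-- The spin value of a site: `true ↦ +1`, `false ↦ -1`, as a real number. -/
def spinR (b : Bool) : ℝ := if b then 1 else -1

/-- The product `σ_i σ_j` over the unordered pair (edge) `{i,j}`. -/
def edgeSpinProdR {V : Type*} (σ : V → Bool) : Sym2 V → ℝ :=
  Sym2.lift ⟨fun i j => spinR (σ i) * spinR (σ j), fun i j => by ring⟩

/-- The Ising partition function of a finite graph `G` at coupling `K`:
`Z(K) = Σ_{σ : V → {±1}} exp(K Σ_{{i,j} ∈ E} σ_i σ_j)`. -/
noncomputable def isingZ {V : Type*} [Fintype V] [DecidableEq V]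
    (G : SimpleGraph V) [DecidableRel G.Adj] (K : ℝ) : ℝ :=
  ∑ σ : V → Bool, Real.exp (K * ∑ e ∈ G.edgeFinset, edgeSpinProdR σ e)

/-!
Since `σ_i σ_j = ±1`, each Boltzmann factor is `exp (K σ_i σ_j) = cosh K (1 + tanh K σ_i σ_j)`.
Expanding the product over the edges turns `Z(K)` into a sum over edge subsets `S` of
`(cosh K)^|E| (tanh K)^|S| Σ_σ ∏_{ij ∈ S} σ_i σ_j`. The spin sum factors over the vertices as
`∏_v Σ_{s = ±1} s^(deg_S v)`, which is `2^|V|` when `S` is even and `0` otherwise.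
-/

open Finset

lemma sum_spinR_pow (d : ℕ) : ∑ b : Bool, spinR b ^ d = if Even d then 2 else 0 := by
  simp only [Fintype.sum_bool, spinR, if_true, Bool.false_eq_true, if_false]
  rcases Nat.even_or_odd d with h | h
  · rw [h.neg_one_pow, if_pos h]; norm_num
  · rw [h.neg_one_pow, if_neg (Nat.not_even_iff_odd.mpr h)]; norm_num

lemma Real.exp_mul_eq_cosh_mul_one_add_tanh_mul (K : ℝ) {x : ℝ} (hx : x = 1 ∨ x = -1) :
    Real.exp (K * x) = Real.cosh K * (1 + Real.tanh K * x) := by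
  have hc := (Real.cosh_pos K).ne'
  rw [Real.tanh_eq_sinh_div_cosh]
  rcases hx with rfl | rfl
  · field_simp
    exact (Real.cosh_add_sinh K).symm
  · field_simp
    linarith [Real.cosh_sub_sinh K]

lemma edgeSpinProdR_eq_one_or_neg_one {V : Type*} (σ : V → Bool) (e : Sym2 V) :
    edgeSpinProdR σ e = 1 ∨ edgeSpinProdR σ e = -1 := by
  induction e using Sym2.inductionOn with
  | hf i j =>
    simp only [edgeSpinProdR, Sym2.lift_mk, spinR]
    rcases σ i <;> rcases σ j <;> simp

lemma edgeSpinProdR_eq_prod_filter_mem {V : Type*} [Fintype V] [DecidableEq V]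
    (σ : V → Bool) {e : Sym2 V} (he : ¬ e.IsDiag) :
    edgeSpinProdR σ e = ∏ v ∈ univ.filter (· ∈ e), spinR (σ v) := by
  induction e using Sym2.inductionOn with
  | hf i j =>
    have hij : i ≠ j := by simpa using he
    have hmem : univ.filter (· ∈ s(i, j)) = {i, j} := by
      ext v; simp [Sym2.mem_iff]
    rw [hmem, prod_pair hij]
    rfl

lemma prod_edgeSpinProdR_eq_prod_pow_degree {V : Type*} [Fintype V] [DecidableEq V]
    (σ : V → Bool) {S : Finset (Sym2 V)} (hS : ∀ e ∈ S, ¬ e.IsDiag) :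
    ∏ e ∈ S, edgeSpinProdR σ e = ∏ v, spinR (σ v) ^ #(S.filter (v ∈ ·)) := by
  rw [prod_congr rfl fun e he => edgeSpinProdR_eq_prod_filter_mem σ (hS e he),
    prod_comm' (t' := univ) (s' := fun v => S.filter (v ∈ ·)) (by simp)]
  exact prod_congr rfl fun v _ => prod_const _

lemma sum_prod_edgeSpinProdR {V : Type*} [Fintype V] [DecidableEq V]
    {S : Finset (Sym2 V)} (hS : ∀ e ∈ S, ¬ e.IsDiag) :
    ∑ σ : V → Bool, ∏ e ∈ S, edgeSpinProdR σ e =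
      if IsEvenSubgraph S then 2 ^ Fintype.card V else 0 := by
  simp_rw [prod_edgeSpinProdR_eq_prod_pow_degree _ hS]
  rw [← Fintype.piFinset_univ,
    ← prod_univ_sum (fun _ : V => univ) (fun v b => spinR b ^ #(S.filter (v ∈ ·)))]
  simp only [sum_spinR_pow]
  split_ifs with hEven
  · rw [prod_congr rfl fun v _ => if_pos (hEven v), prod_const, card_univ]
  · obtain ⟨v, hv⟩ := not_forall.mp hEven
    exact prod_eq_zero (mem_univ v) (if_neg hv)

lemma exp_mul_sum_edgeSpinProdR {V : Type*} (σ : V → Bool) (K : ℝ) (E : Finset (Sym2 V)) :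
    Real.exp (K * ∑ e ∈ E, edgeSpinProdR σ e) =
      Real.cosh K ^ #E * ∑ S ∈ E.powerset, Real.tanh K ^ #S * ∏ e ∈ S, edgeSpinProdR σ e := by
  rw [mul_sum, Real.exp_sum, prod_congr rfl fun e _ =>
      Real.exp_mul_eq_cosh_mul_one_add_tanh_mul K (edgeSpinProdR_eq_one_or_neg_one σ e),
    prod_mul_distrib, prod_const, prod_one_add]
  simp_rw [prod_mul_distrib, prod_const]

lemma sum_exp_mul_sum_edgeSpinProdR {V : Type*} [Fintype V] [DecidableEq V] (K : ℝ)
    {E : Finset (Sym2 V)} (hE : ∀ e ∈ E, ¬ e.IsDiag) :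
    ∑ σ : V → Bool, Real.exp (K * ∑ e ∈ E, edgeSpinProdR σ e) =
      2 ^ Fintype.card V * Real.cosh K ^ #E *
        ∑ S ∈ E.powerset.filter IsEvenSubgraph, Real.tanh K ^ #S := by
  simp_rw [exp_mul_sum_edgeSpinProdR]
  rw [← mul_sum, Finset.sum_comm, sum_filter, mul_sum, mul_sum (a := 2 ^ _ * _)]
  refine sum_congr rfl fun S hS => ?_
  rw [← mul_sum, sum_prod_edgeSpinProdR fun e he => hE e (mem_powerset.mp hS he)]
  split_ifs <;> ring

/-- For a finite graph `G` and `K ∈ ℝ`, the Ising partition function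
satisfies `Z(K) = 2^{|V|} (cosh K)^{|E|} Σ_S (tanh K)^{|S|}`, the sum running over all
even subgraphs `S ⊆ E` (including the empty set). -/
theorem isingZ_high_temperature_expansion {V : Type*} [Fintype V] [DecidableEq V]
    (G : SimpleGraph V) [DecidableRel G.Adj] (K : ℝ) :
    isingZ G K =
      (2 : ℝ) ^ (Fintype.card V) * (Real.cosh K) ^ (G.edgeFinset.card) *
        ∑ S ∈ G.edgeFinset.powerset.filter (fun S => IsEvenSubgraph S),
          (Real.tanh K) ^ S.card :=
  sum_exp_mul_sum_edgeSpinProdR K fun _ he =>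
    G.not_isDiag_of_mem_edgeSet (SimpleGraph.mem_edgeFinset.mp he)
end

section
/- Let Γ be a finite directed graph with a linear order on the edges at each vertex and antisymmetric complex weights τ_{ee'} = −τ_{e'e} for pairs of distinct edges meeting at a vertex. For any simple loop ℓ of Γ, the amplitude A_ℓ(τ) computed from a cyclic traversal of ℓ equals the amplitude computed from the reversed traversal; i.e., A_ℓ(τ) = A_{ℓ^{−1}}(τ). -/
/-- A step of a walk in a directed graph: an edge together with a direction of traversal
(`true` = in agreement with the orientation, from source to target). -/
abbrev Step (E : Type*) := E × Bool

/-- The starting vertex of a step. -/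
def stepStart {V E : Type*} (src tgt : E → V) (p : Step E) : V :=
  if p.2 then src p.1 else tgt p.1

/-- The ending vertex of a step. -/
def stepEnd {V E : Type*} (src tgt : E → V) (p : Step E) : V :=
  if p.2 then tgt p.1 else src p.1

/-- The list of cyclically consecutive pairs of entries of a list. -/
def cyclicPairs {α : Type*} (l : List α) : List (α × α) := l.zip (l.rotate 1)

/-- A simple loop: a nonempty closed walk (the end of each step is the start of the
cyclically next step) using each edge at most once. -/
def IsSimpleLoop {V E : Type*} (src tgt : E → V) (ℓ : List (Step E)) : Prop :=
  ℓ ≠ [] ∧ (∀ q ∈ cyclicPairs ℓ, stepEnd src tgt q.1 = stepStart src tgt q.2) ∧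
    (ℓ.map Prod.fst).Nodup

/-- Two edges meet at a vertex. -/
def SharesVertex {V E : Type*} (src tgt : E → V) (e e' : E) : Prop :=
  src e = src e' ∨ src e = tgt e' ∨ tgt e = src e' ∨ tgt e = tgt e'

/-- The amplitude `A_ℓ(τ) = -(-1)^{|e|} ∏ τ_{e_i e_{i+1}}` of a cyclic traversal `ℓ`,
where `|e|` is the number of edges traversed in agreement with the orientation and the
product is over cyclically consecutive pairs of edges. -/
def loopAmp {E : Type*} (τ : E → E → ℂ) (ℓ : List (Step E)) : ℂ :=
  -(-1 : ℂ) ^ (ℓ.filter (fun p => p.2)).length *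
    ((cyclicPairs ℓ).map (fun q => τ q.1.1 q.2.1)).prod

/-- The reversed traversal: traverse the edges in the opposite cyclic order, each in the
opposite direction. -/
def reverseLoop {E : Type*} (ℓ : List (Step E)) : List (Step E) :=
  (ℓ.map (fun p => (p.1, !p.2))).reverse

/-!
Reversing a cyclic traversal reverses the cyclic order of its consecutive pairs of edges and
flips the direction of every step. Each factor `τ_{e_i e_{i+1}}` thus becomes
`τ_{e_{i+1} e_i} = -τ_{e_i e_{i+1}}`, which is legitimate because consecutive edges of a simple
loop meet at a vertex and are distinct (a loop of length one would be a self-loop). This costs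
`(-1)^n` for a loop of length `n`, while the number of forward steps changes from `k` to `n - k`,
and `(-1)^{n-k} (-1)^n = (-1)^k`.
-/

lemma length_cyclicPairs {α : Type*} (l : List α) : (cyclicPairs l).length = l.length := by
  simp [cyclicPairs]

lemma getElem_cyclicPairs {α : Type*} (l : List α) (i : ℕ) (h : i < (cyclicPairs l).length) :
    (cyclicPairs l)[i] =
      (l[i]'(by simpa [length_cyclicPairs] using h),
        l[(i + 1) % l.length]'(Nat.mod_lt _ (by simp [length_cyclicPairs] at h; omega))) := by
  simp [cyclicPairs, List.getElem_rotate]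

lemma cyclicPairs_map {α β : Type*} (g : α → β) (l : List α) :
    cyclicPairs (l.map g) = (cyclicPairs l).map (Prod.map g g) := by
  rw [cyclicPairs, ← List.map_rotate, List.zip_map, cyclicPairs]

lemma cyclicPairs_reverse {α : Type*} (l : List α) :
    cyclicPairs l.reverse = (((cyclicPairs l).map Prod.swap).reverse).rotate 1 := by
  apply List.ext_getElem
  · simp [length_cyclicPairs]
  · intro i h1 h2
    have hi : i < l.length := by simpa [length_cyclicPairs] using h1
    simp only [getElem_cyclicPairs, List.getElem_rotate, List.getElem_reverse, List.getElem_map,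
      List.length_reverse, List.length_map, length_cyclicPairs, Prod.swap_prod_mk]
    rcases Nat.lt_or_ge (i + 1) l.length with h | h
    · have e : (l.length - 1 - (i + 1) + 1) % l.length = l.length - 1 - i := by
        rw [Nat.mod_eq_of_lt (by omega)]; omega
      simp only [Nat.mod_eq_of_lt h, e]
    · have e1 : (i + 1) % l.length = 0 := by rw [show i + 1 = l.length by omega, Nat.mod_self]
      have e2 : (l.length - 1 - 0 + 1) % l.length = 0 := by
        rw [Nat.sub_zero, Nat.sub_add_cancel (by omega), Nat.mod_self]
      simp only [e1, e2, show l.length - 1 - i = 0 by omega]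

lemma fst_ne_snd_of_mem_cyclicPairs {α : Type*} {l : List α} (hl : l.Nodup)
    (hlen : 1 < l.length) {q : α × α} (hq : q ∈ cyclicPairs l) : q.1 ≠ q.2 := by
  obtain ⟨i, hi, rfl⟩ := List.mem_iff_getElem.mp hq
  rw [getElem_cyclicPairs]
  intro h
  have hi' : i < l.length := by simpa [length_cyclicPairs] using hi
  have hmod := hl.getElem_inj_iff.mp h
  rcases Nat.lt_or_ge (i + 1) l.length with h' | h'
  · rw [Nat.mod_eq_of_lt h'] at hmod; omega
  · rw [show i + 1 = l.length by omega, Nat.mod_self] at hmod; omega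

section Loops

variable {V E : Type*}

lemma sharesVertex_of_stepEnd_eq_stepStart (src tgt : E → V) {p p' : Step E}
    (h : stepEnd src tgt p = stepStart src tgt p') : SharesVertex src tgt p.1 p'.1 := by
  unfold SharesVertex
  cases hb : p.2 <;> cases hb' : p'.2 <;> simp_all [stepEnd, stepStart]

lemma SharesVertex.symm {src tgt : E → V} {e e' : E} (h : SharesVertex src tgt e e') :
    SharesVertex src tgt e' e := by
  unfold SharesVertex at h ⊢
  tauto

lemma stepEnd_ne_stepStart {src tgt : E → V} (hsimple : ∀ e, src e ≠ tgt e) (p : Step E) :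
    stepEnd src tgt p ≠ stepStart src tgt p := by
  cases hb : p.2 <;> simp [stepEnd, stepStart, hb, hsimple, (hsimple _).symm]

namespace IsSimpleLoop

variable {src tgt : E → V} {ℓ : List (Step E)}

lemma sharesVertex (hℓ : IsSimpleLoop src tgt ℓ) {q : Step E × Step E}
    (hq : q ∈ cyclicPairs ℓ) : SharesVertex src tgt q.1.1 q.2.1 :=
  sharesVertex_of_stepEnd_eq_stepStart src tgt (hℓ.2.1 q hq)

lemma fst_ne_snd (hsimple : ∀ e, src e ≠ tgt e) (hℓ : IsSimpleLoop src tgt ℓ)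
    {q : Step E × Step E} (hq : q ∈ cyclicPairs ℓ) : q.1.1 ≠ q.2.1 := by
  obtain ⟨-, hclosed, hnodup⟩ := hℓ
  match ℓ, hq with
  | [p], hq =>
    obtain rfl : q = (p, p) := by simpa [cyclicPairs] using hq
    exact absurd (hclosed _ hq) (stepEnd_ne_stepStart hsimple p)
  | p :: p' :: ps, hq =>
    refine fst_ne_snd_of_mem_cyclicPairs hnodup (by simp) (q := Prod.map Prod.fst Prod.fst q) ?_
    rw [cyclicPairs_map]
    exact List.mem_map_of_mem hq

end IsSimpleLoop

lemma cyclicPairs_reverseLoop_perm (ℓ : List (Step E)) :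
    ((cyclicPairs (reverseLoop ℓ)).map fun q => (q.1.1, q.2.1)).Perm
      ((cyclicPairs ℓ).map fun q => (q.2.1, q.1.1)) := by
  rw [reverseLoop, cyclicPairs_reverse, cyclicPairs_map]
  refine (((List.rotate_perm _ 1).trans (List.reverse_perm _)).map _).trans ?_
  simp [Function.comp_def]

lemma prod_cyclicPairs_reverseLoop {M : Type*} [CommMonoid M] [HasDistribNeg M] {τ : E → E → M}
    {ℓ : List (Step E)} (hτ : ∀ q ∈ cyclicPairs ℓ, τ q.2.1 q.1.1 = -τ q.1.1 q.2.1) :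
    ((cyclicPairs (reverseLoop ℓ)).map fun q => τ q.1.1 q.2.1).prod =
      (-1) ^ ℓ.length * ((cyclicPairs ℓ).map fun q => τ q.1.1 q.2.1).prod := by
  have h := ((cyclicPairs_reverseLoop_perm ℓ).map (Function.uncurry τ)).prod_eq
  simp only [List.map_map, Function.comp_def, Function.uncurry_apply_pair] at h
  rw [h, List.map_congr_left hτ]
  simpa [length_cyclicPairs, Function.comp_def] using
    List.prod_map_neg ((cyclicPairs ℓ).map fun q => τ q.1.1 q.2.1)

lemma length_filter_reverseLoop_add (ℓ : List (Step E)) :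
    ((reverseLoop ℓ).filter fun p => p.2).length + (ℓ.filter fun p => p.2).length =
      ℓ.length := by
  simpa [reverseLoop, List.filter_reverse, List.filter_map, Function.comp_def, add_comm]
    using (ℓ.length_eq_length_filter_add fun p => p.2).symm

theorem loopAmp_reverseLoop_of_antisymm {τ : E → E → ℂ} {ℓ : List (Step E)}
    (hτ : ∀ q ∈ cyclicPairs ℓ, τ q.2.1 q.1.1 = -τ q.1.1 q.2.1) :
    loopAmp τ ℓ = loopAmp τ (reverseLoop ℓ) := by
  rw [loopAmp, loopAmp, prod_cyclicPairs_reverseLoop hτ, ← length_filter_reverseLoop_add ℓ,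
    pow_add]
  have hsq : ((-1 : ℂ) ^ ((reverseLoop ℓ).filter fun p => p.2).length) ^ 2 = 1 := by
    rw [← pow_mul, mul_comm, pow_mul, neg_one_sq, one_pow]
  linear_combination ((-1 : ℂ) ^ (ℓ.filter fun p => p.2).length *
    ((cyclicPairs ℓ).map fun q => τ q.1.1 q.2.1).prod) * hsq

end Loops

theorem loopAmp_reverse_general {V E : Type*}
    (src tgt : E → V) (hsimple : ∀ e, src e ≠ tgt e)
    (τ : E → E → ℂ)
    (hanti : ∀ e e', e ≠ e' → SharesVertex src tgt e e' → τ e e' = -τ e' e)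
    (ℓ : List (Step E)) (hℓ : IsSimpleLoop src tgt ℓ) :
    loopAmp τ ℓ = loopAmp τ (reverseLoop ℓ) :=
  loopAmp_reverseLoop_of_antisymm fun _ hq =>
    hanti _ _ (hℓ.fst_ne_snd hsimple hq).symm (hℓ.sharesVertex hq).symm

/-- In a finite directed graph (with no self-loops) with antisymmetric
complex weights `τ_{ee'} = -τ_{e'e}` on pairs of distinct edges meeting at a vertex, the
amplitude of a simple loop is invariant under reversal of the traversal:
`A_ℓ(τ) = A_{ℓ⁻¹}(τ)`. -/
theorem loopAmp_reverse {V E : Type*} [Fintype V] [Fintype E]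
    (src tgt : E → V) (hsimple : ∀ e, src e ≠ tgt e)
    (τ : E → E → ℂ)
    (hanti : ∀ e e', e ≠ e' → SharesVertex src tgt e e' → τ e e' = -τ e' e)
    (ℓ : List (Step E)) (hℓ : IsSimpleLoop src tgt ℓ) :
    loopAmp τ ℓ = loopAmp τ (reverseLoop ℓ) :=
  loopAmp_reverse_general src tgt hsimple τ hanti ℓ hℓ
end
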